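/- Monotone random walk domination for λ updates: let (λ_t) evolve by λ_{t+1} = λ_t/F on success (probability at most q per step while in a state set X) and λ_{t+1} = λ_t · F^{1/s} otherwise, with F > 1 and s > 0. Starting from λ_0 ∈ [α F^{β-1}, α F^β) with α ≥ 1 and β ∈ ℕ, the probability that λ falls below α before exceeding α F^β or leaving X is at most the ruin probability of a biased random walk on {0,...,β+1} started at β with down-probability q, namely (1/q - 2)/((1/q - 1)^{β+1} - 1) when q < 1/2. -/

import Mathlib

/-!
A success lowers `log_F (λ/α)` by `1` and a failure raises it by `1/s ≥ 1`, so the walk `k` on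
`{0, …, β + 1}` started at `β` that steps `-1` on a success and `+1` on a failure keeps
`α F^(k - 1) ≤ λ`; it therefore reaches `0` whenever `λ` drops below `α` before reaching `α F^β`.
To keep it adapted, the walk is frozen where the conditional success probability may exceed `q`.
With `r = 1/q - 1`, the gambler's-ruin function `φ k = (r^(β+1-k) - 1)/(r^(β+1) - 1)` is
decreasing and harmonic for a walk stepping down with probability `q`, so `φ(k_t)` is a
supermartingale and `P(k_n = 0) ≤ E φ(k_n) ≤ φ(β)`, which is the claimed bound.
-/

open MeasureTheory

theorem integral_piecewise_le_of_condExp_indicator_le {Ω : Type*} {m m0 : MeasurableSpace Ω}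
    {μ : Measure Ω} [IsFiniteMeasure μ] (hm : m ≤ m0) {S : Set Ω} [DecidablePred (· ∈ S)]
    (hS : MeasurableSet S) {a b : Ω → ℝ} (ha : StronglyMeasurable[m] a)
    (hb : StronglyMeasurable[m] b) (haI : Integrable a μ) (hbI : Integrable b μ) (hba : b ≤ a)
    {q : ℝ} (hq : ∀ᵐ ω ∂μ, a ω ≠ b ω → μ[S.indicator (fun _ => (1:ℝ)) | m] ω ≤ q) :
    ∫ ω, S.piecewise a b ω ∂μ ≤ ∫ ω, (q * a ω + (1 - q) * b ω) ∂μ := by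
  set p := μ[S.indicator (fun _ => (1:ℝ)) | m]
  set g := S.indicator (a - b)
  have hg : g = (a - b) * S.indicator (fun _ => 1) := by
    ext ω; by_cases h : ω ∈ S <;> simp [g, h]
  have hgI : Integrable g μ := (haI.sub hbI).indicator hS
  have hpull : μ[g | m] =ᵐ[μ] (a - b) * p :=
    hg ▸ condExp_mul_of_stronglyMeasurable_left (ha.sub hb) (hg ▸ hgI)
      ((integrable_const 1).indicator hS)
  have hqI : Integrable (fun ω => q * (a ω - b ω)) μ := (haI.sub hbI).const_mul q
  have hgp : ∫ ω, g ω ∂μ ≤ ∫ ω, q * (a ω - b ω) ∂μ := by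
    rw [← integral_condExp hm, integral_congr_ae hpull]
    refine integral_mono_ae (integrable_condExp.congr hpull) hqI ?_
    filter_upwards [hq] with ω hω
    by_cases hab : a ω = b ω
    · simp [hab]
    · simpa [mul_comm] using mul_le_mul_of_nonneg_left (hω hab) (sub_nonneg.2 (hba ω))
  have hpiece : S.piecewise a b = b + g := by
    ext ω; by_cases h : ω ∈ S <;> simp [g, h]
  calc ∫ ω, S.piecewise a b ω ∂μ = ∫ ω, b ω ∂μ + ∫ ω, g ω ∂μ := by
        rw [hpiece, ← integral_add hbI hgI]; rfl
    _ ≤ ∫ ω, b ω ∂μ + ∫ ω, q * (a ω - b ω) ∂μ := by gcongr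
    _ = ∫ ω, (q * a ω + (1 - q) * b ω) ∂μ := by
        rw [← integral_add hbI hqI]
        congr 1; ext ω; ring

namespace GamblersRuin

/-- Probability that the walk stepping up and down with odds `r : 1`, started at `k`, hits `0`
before `N`. -/
noncomputable def ruinProb (r : ℝ) (N : ℕ) (k : ℤ) : ℝ :=
  (r ^ ((N : ℤ) - k) - 1) / (r ^ N - 1)

variable {r : ℝ} {N : ℕ}

theorem ruinProb_zero (hr : 1 < r) (hN : 0 < N) : ruinProb r N 0 = 1 := by
  have : r ^ N - 1 ≠ 0 := (sub_pos.2 (one_lt_pow₀ hr hN.ne')).ne'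
  simp [ruinProb, this]

theorem ruinProb_antitone (hr : 1 < r) (hN : 0 < N) : Antitone (ruinProb r N) := by
  intro k l hkl
  exact div_le_div_of_nonneg_right
    (sub_le_sub_right (zpow_le_zpow_right₀ hr.le (by omega)) 1)
    (sub_pos.2 (one_lt_pow₀ hr hN.ne')).le

theorem ruinProb_nonneg (hr : 1 < r) {k : ℤ} (hk : k ≤ N) : 0 ≤ ruinProb r N k :=
  div_nonneg (sub_nonneg.2 (one_le_zpow₀ hr.le (by omega))) (sub_nonneg.2 (one_le_pow₀ hr.le))

theorem ruinProb_le_one (hr : 1 < r) (hN : 0 < N) {k : ℤ} (hk : 0 ≤ k) : ruinProb r N k ≤ 1 :=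
  ruinProb_zero hr hN ▸ ruinProb_antitone hr hN hk

theorem ruinProb_harmonic {q : ℝ} (hr0 : r ≠ 0) (hr : q * r ^ 2 + (1 - q) = r) (k : ℤ) :
    q * ruinProb r N (k - 1) + (1 - q) * ruinProb r N (k + 1) = ruinProb r N k := by
  obtain ⟨j, hj⟩ : ∃ j : ℤ, (N : ℤ) - k = j + 1 := ⟨N - k - 1, by ring⟩
  rw [ruinProb, ruinProb, ruinProb, show (N : ℤ) - (k - 1) = j + 2 by omega,
    show (N : ℤ) - (k + 1) = j by omega, hj, zpow_add₀ hr0, zpow_add₀ hr0, zpow_one, zpow_two]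
  linear_combination (r ^ j / (r ^ N - 1)) * hr

theorem norm_ruinProb_le_one (hr : 1 < r) (hN : 0 < N) {k : ℤ} (h0 : 0 ≤ k) (hk : k ≤ N) :
    ‖ruinProb r N k‖ ≤ 1 := by
  rw [Real.norm_of_nonneg (ruinProb_nonneg hr hk)]
  exact ruinProb_le_one hr hN h0

theorem ruinProb_succ_self : ruinProb r (N + 1) N = (r - 1) / (r ^ (N + 1) - 1) := by
  simp [ruinProb]

variable {Ω : Type*}

open Classical in
noncomputable def ruinWalk (β : ℕ) (C S : ℕ → Set Ω) : ℕ → Ω → ℤ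
  | 0 => fun _ => β
  | t + 1 => fun ω =>
      if 0 < ruinWalk β C S t ω ∧ ruinWalk β C S t ω ≤ β ∧ ω ∈ C t then
        (if ω ∈ S t then ruinWalk β C S t ω - 1 else ruinWalk β C S t ω + 1)
      else ruinWalk β C S t ω

variable {β : ℕ} {C S : ℕ → Set Ω}

theorem ruinWalk_mem_Icc (t : ℕ) (ω : Ω) : ruinWalk β C S t ω ∈ Set.Icc 0 ((β : ℤ) + 1) := by
  induction t with
  | zero => simp [ruinWalk]
  | succ t ih =>
    obtain ⟨h0, h1⟩ := ih
    simp only [ruinWalk, Set.mem_Icc]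
    split_ifs <;> omega

theorem ruinWalk_eq_zero_of_le {t u : ℕ} (htu : t ≤ u) {ω : Ω}
    (h : ruinWalk β C S t ω = 0) : ruinWalk β C S u ω = 0 := by
  induction u, htu using Nat.le_induction with
  | base => exact h
  | succ u _ ih => simp [ruinWalk, ih]

theorem measurable_ruinWalk {m0 : MeasurableSpace Ω} (ℱ : Filtration ℕ m0)
    (hC : ∀ t, MeasurableSet[ℱ t] (C t)) (hS : ∀ t, MeasurableSet[ℱ (t + 1)] (S t)) (t : ℕ) :
    Measurable[ℱ t] (ruinWalk β C S t) := by
  induction t with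
  | zero => exact measurable_const
  | succ t ih =>
    have ih' := ih.mono (ℱ.mono t.le_succ) le_rfl
    exact Measurable.ite ((ih' measurableSet_Ioi).inter ((ih' measurableSet_Iic).inter
      (ℱ.mono t.le_succ _ (hC t))))
      (Measurable.ite (hS t) (ih'.sub_const 1) (ih'.add_const 1)) ih'

section Coupling

variable {F G α : ℝ} {lam : ℕ → ℝ} {ω : Ω} {T : ℕ}

theorem ruinWalk_eq_zero_or_le (hF : 1 < F) (hFG : F ≤ G) (hα : 0 < α)
    (hinit : α * F ^ ((β : ℤ) - 1) ≤ lam 0)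
    (hsucc : ∀ t, ω ∈ S t → lam (t + 1) = lam t / F)
    (hfail : ∀ t, ω ∉ S t → lam (t + 1) = lam t * G)
    (hlt : ∀ t ≤ T, lam t < α * F ^ (β : ℤ)) (hC : ∀ t < T, ω ∈ C t) :
    ∀ t ≤ T, ruinWalk β C S t ω = 0 ∨ (0 < ruinWalk β C S t ω ∧ ruinWalk β C S t ω ≤ β ∧
      α * F ^ (ruinWalk β C S t ω - 1) ≤ lam t) := by
  intro t ht
  induction t with
  | zero =>
    rcases Nat.eq_zero_or_pos β with hβ | hβ
    · simp [ruinWalk, hβ]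
    · exact Or.inr ⟨by simp [ruinWalk, hβ], by simp [ruinWalk], hinit⟩
  | succ t ih =>
    rcases ih (by omega) with hzero | ⟨hpos, hle, hlam⟩
    · exact Or.inl (ruinWalk_eq_zero_of_le t.le_succ hzero)
    set k := ruinWalk β C S t ω
    have hF0 : 0 < F := one_pos.trans hF
    have hCt : ω ∈ C t := hC t (by omega)
    by_cases hSt : ω ∈ S t
    · rw [show ruinWalk β C S (t + 1) ω = k - 1 by simp [ruinWalk, k, hpos, hle, hCt, hSt],
        hsucc t hSt]
      rcases eq_or_lt_of_le (show 1 ≤ k by omega) with hk | hk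
      · exact Or.inl (by omega)
      refine Or.inr ⟨by omega, by omega, ?_⟩
      rw [zpow_sub_one₀ hF0.ne', ← mul_assoc, ← div_eq_mul_inv]
      gcongr
    · rw [show ruinWalk β C S (t + 1) ω = k + 1 by simp [ruinWalk, k, hpos, hle, hCt, hSt],
        hfail t hSt, add_sub_cancel_right]
      have hup : α * F ^ k ≤ lam t * G := by
        calc α * F ^ k = α * F ^ (k - 1) * F := by
              rw [mul_assoc, ← zpow_add_one₀ hF0.ne', sub_add_cancel]
          _ ≤ lam t * G := by
              gcongr
              exact (mul_pos hα (zpow_pos hF0 _)).le.trans hlam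
      refine Or.inr ⟨by omega, ?_, hup⟩
      by_contra hk
      have : k = β := by omega
      exact (hup.trans_eq (hfail t hSt).symm).not_gt (this ▸ hlt (t + 1) ht)

theorem ruinWalk_eq_zero_of_lt (hF : 1 < F) (hFG : F ≤ G) (hα : 0 < α)
    (hinit : α * F ^ ((β : ℤ) - 1) ≤ lam 0)
    (hsucc : ∀ t, ω ∈ S t → lam (t + 1) = lam t / F)
    (hfail : ∀ t, ω ∉ S t → lam (t + 1) = lam t * G)
    (hT : lam T < α) (hpre : ∀ t < T, lam t < α * F ^ (β : ℤ) ∧ ω ∈ C t) :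
    ruinWalk β C S T ω = 0 := by
  have hlt : ∀ t ≤ T, lam t < α * F ^ (β : ℤ) := by
    intro t ht
    rcases ht.lt_or_eq with ht | rfl
    · exact (hpre t ht).1
    · exact hT.trans_le (le_mul_of_one_le_right hα.le (one_le_zpow₀ hF.le (by omega)))
  rcases ruinWalk_eq_zero_or_le hF hFG hα hinit hsucc hfail hlt (fun t ht => (hpre t ht).2) T
    le_rfl with hzero | ⟨hpos, -, hlam⟩
  · exact hzero
  · have : α ≤ α * F ^ (ruinWalk β C S T ω - 1) :=
      le_mul_of_one_le_right hα.le (one_le_zpow₀ hF.le (by omega))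
    linarith

end Coupling

section Supermartingale

open scoped Classical

variable {m0 : MeasurableSpace Ω} {μ : Measure Ω} [IsFiniteMeasure μ] {ℱ : Filtration ℕ m0}
  {q : ℝ}

theorem integrable_ruinProb_comp (hr : 1 < r) (hN : 0 < N) {f : Ω → ℤ}
    (hf : Measurable f) (hfN : ∀ ω, f ω ∈ Set.Icc 0 (N : ℤ)) :
    Integrable (fun ω => ruinProb r N (f ω)) μ :=
  Integrable.of_bound ((measurable_from_top (f := ruinProb r N)).comp hf).aestronglyMeasurable 1
    (ae_of_all _ fun ω => norm_ruinProb_le_one hr hN (hfN ω).1 (hfN ω).2)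

theorem integral_ruinProb_ruinWalk_succ_le (hC : ∀ t, MeasurableSet[ℱ t] (C t))
    (hS : ∀ t, MeasurableSet[ℱ (t + 1)] (S t))
    (hCq : ∀ t, ∀ ω ∈ C t, μ[(S t).indicator (fun _ => (1:ℝ)) | ℱ t] ω ≤ q)
    (hr : 1 < r) (hqr : q * r ^ 2 + (1 - q) = r) (n : ℕ) :
    ∫ ω, ruinProb r (β + 1) (ruinWalk β C S (n + 1) ω) ∂μ ≤
      ∫ ω, ruinProb r (β + 1) (ruinWalk β C S n ω) ∂μ := by
  set w := ruinWalk β C S n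
  set A := {ω | 0 < w ω ∧ w ω ≤ β ∧ ω ∈ C n}
  set δ : Ω → ℤ := fun ω => if ω ∈ A then 1 else 0
  have hw : Measurable[ℱ n] w := measurable_ruinWalk ℱ hC hS n
  have hδ : Measurable[ℱ n] δ :=
    Measurable.ite ((hw measurableSet_Ioi).inter ((hw measurableSet_Iic).inter (hC n)))
      measurable_const measurable_const
  have hbound : ∀ ω, (0 ≤ w ω - δ ω ∧ w ω - δ ω ≤ (β + 1 : ℕ)) ∧
      (0 ≤ w ω + δ ω ∧ w ω + δ ω ≤ (β + 1 : ℕ)) := by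
    intro ω
    obtain ⟨h0, h1⟩ : 0 ≤ w ω ∧ w ω ≤ β + 1 := ruinWalk_mem_Icc n ω
    by_cases hω : ω ∈ A
    · simp only [δ, if_pos hω]
      obtain ⟨hpos, hle, -⟩ := hω
      omega
    · simp only [δ, if_neg hω]
      omega
  set a := fun ω => ruinProb r (β + 1) (w ω - δ ω)
  set b := fun ω => ruinProb r (β + 1) (w ω + δ ω)
  have hpiece :
      (fun ω => ruinProb r (β + 1) (ruinWalk β C S (n + 1) ω)) = (S n).piecewise a b := by
    ext ω
    simp only [ruinWalk, Set.piecewise, a, b, δ, A, w, Set.mem_ofPred_eq]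
    split_ifs <;> simp
  have hharm : ∀ ω, q * a ω + (1 - q) * b ω = ruinProb r (β + 1) (w ω) := by
    intro ω
    by_cases hω : ω ∈ A
    · simpa [a, b, δ, hω] using ruinProb_harmonic (N := β + 1) (by positivity) hqr (w ω)
    · simp [a, b, δ, hω]; ring
  have hab : b ≤ a := fun ω => ruinProb_antitone hr β.succ_pos (by simp [δ]; split_ifs <;> omega)
  have hq : ∀ ω, a ω ≠ b ω → μ[(S n).indicator (fun _ => (1:ℝ)) | ℱ n] ω ≤ q := by
    intro ω hne
    by_cases hω : ω ∈ A
    · exact hCq n ω hω.2.2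
    · simp [a, b, δ, hω] at hne
  rw [hpiece, ← integral_congr_ae (ae_of_all μ (fun ω => hharm ω))]
  exact integral_piecewise_le_of_condExp_indicator_le (ℱ.le n) (ℱ.le (n + 1) _ (hS n))
    ((measurable_from_top (f := ruinProb r (β + 1))).comp (hw.sub hδ)).stronglyMeasurable
    ((measurable_from_top (f := ruinProb r (β + 1))).comp (hw.add hδ)).stronglyMeasurable
    (integrable_ruinProb_comp hr β.succ_pos ((hw.sub hδ).mono (ℱ.le n) le_rfl)
      fun ω => (hbound ω).1)
    (integrable_ruinProb_comp hr β.succ_pos ((hw.add hδ).mono (ℱ.le n) le_rfl)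
      fun ω => (hbound ω).2)
    hab (ae_of_all μ hq)

variable [IsProbabilityMeasure μ]

theorem integral_ruinProb_ruinWalk_le (hC : ∀ t, MeasurableSet[ℱ t] (C t))
    (hS : ∀ t, MeasurableSet[ℱ (t + 1)] (S t))
    (hCq : ∀ t, ∀ ω ∈ C t, μ[(S t).indicator (fun _ => (1:ℝ)) | ℱ t] ω ≤ q)
    (hr : 1 < r) (hqr : q * r ^ 2 + (1 - q) = r) (n : ℕ) :
    ∫ ω, ruinProb r (β + 1) (ruinWalk β C S n ω) ∂μ ≤ ruinProb r (β + 1) β := by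
  induction n with
  | zero => simp [ruinWalk]
  | succ n ih => exact (integral_ruinProb_ruinWalk_succ_le hC hS hCq hr hqr n).trans ih

theorem measure_ruinWalk_eq_zero_le (hC : ∀ t, MeasurableSet[ℱ t] (C t))
    (hS : ∀ t, MeasurableSet[ℱ (t + 1)] (S t))
    (hCq : ∀ t, ∀ ω ∈ C t, μ[(S t).indicator (fun _ => (1:ℝ)) | ℱ t] ω ≤ q)
    (hr : 1 < r) (hqr : q * r ^ 2 + (1 - q) = r) (n : ℕ) :
    μ {ω | ruinWalk β C S n ω = 0} ≤ ENNReal.ofReal (ruinProb r (β + 1) β) := by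
  set f := fun ω => ruinProb r (β + 1) (ruinWalk β C S n ω)
  have hsub : {ω | ruinWalk β C S n ω = 0} ⊆ {ω | 1 ≤ f ω} := fun ω hω => by
    simp [f, show ruinWalk β C S n ω = 0 from hω, ruinProb_zero hr β.succ_pos]
  have hmarkov := mul_meas_ge_le_integral_of_nonneg
    (ae_of_all μ fun ω => ruinProb_nonneg hr (ruinWalk_mem_Icc n ω).2)
    (integrable_ruinProb_comp hr β.succ_pos ((measurable_ruinWalk ℱ hC hS n).mono (ℱ.le n) le_rfl)
      (ruinWalk_mem_Icc n)) 1
  rw [one_mul] at hmarkov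
  calc μ {ω | ruinWalk β C S n ω = 0} ≤ μ {ω | 1 ≤ f ω} := measure_mono hsub
    _ = ENNReal.ofReal (μ.real {ω | 1 ≤ f ω}) := (ofReal_measureReal).symm
    _ ≤ ENNReal.ofReal (ruinProb r (β + 1) β) :=
      ENNReal.ofReal_le_ofReal (hmarkov.trans (integral_ruinProb_ruinWalk_le hC hS hCq hr hqr n))

theorem measure_exists_ruinWalk_eq_zero_le (hC : ∀ t, MeasurableSet[ℱ t] (C t))
    (hS : ∀ t, MeasurableSet[ℱ (t + 1)] (S t))
    (hCq : ∀ t, ∀ ω ∈ C t, μ[(S t).indicator (fun _ => (1:ℝ)) | ℱ t] ω ≤ q)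
    (hr : 1 < r) (hqr : q * r ^ 2 + (1 - q) = r) :
    μ {ω | ∃ n, ruinWalk β C S n ω = 0} ≤ ENNReal.ofReal (ruinProb r (β + 1) β) := by
  have hmono : Monotone fun n => {ω | ruinWalk β C S n ω = 0} :=
    fun _ _ hnm _ hω => ruinWalk_eq_zero_of_le hnm hω
  rw [Set.ofPred_exists, hmono.measure_iUnion]
  exact iSup_le (measure_ruinWalk_eq_zero_le hC hS hCq hr hqr)

end Supermartingale

end GamblersRuin

open GamblersRuin

theorem stmt_15_general {Ω : Type*} {m0 : MeasurableSpace Ω} (μ : Measure Ω)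
    [IsProbabilityMeasure μ] (ℱ : Filtration ℕ m0)
    (F s α q : ℝ) (β : ℕ) (hF : 1 < F) (hs0 : 0 < s) (hs1 : s ≤ 1)
    (hα : 1 ≤ α) (hq0 : 0 < q) (hq : q < 1/2)
    (lam : ℕ → Ω → ℝ) (S X : ℕ → Set Ω)
    (hSmeas : ∀ t, MeasurableSet[ℱ (t + 1)] (S t))
    (hinit : ∀ ω, α * F ^ ((β : ℝ) - 1) ≤ lam 0 ω ∧ lam 0 ω < α * F ^ (β : ℝ))
    (hsucc : ∀ t ω, ω ∈ S t → lam (t + 1) ω = lam t ω / F)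
    (hfail : ∀ t ω, ω ∉ S t → lam (t + 1) ω = lam t ω * F ^ (1/s))
    (hcond : ∀ t, ∀ᵐ ω ∂μ, ω ∈ X t →
      (μ[(S t).indicator (fun _ => (1:ℝ)) | ℱ t]) ω ≤ q) :
    μ {ω | ∃ T : ℕ, lam T ω < α ∧
        ∀ t < T, lam t ω < α * F ^ (β : ℝ) ∧ ω ∈ X t} ≤
      ENNReal.ofReal ((1/q - 2) / ((1/q - 1) ^ (β + 1) - 1)) := by
  set r := 1 / q - 1
  have hr : 1 < r := by
    have : 2 < 1 / q := by rw [lt_one_div (by norm_num) hq0]; linarith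
    linarith
  have hqr : q * r ^ 2 + (1 - q) = r := by simp only [r]; field_simp; ring
  -- `X t` need not be `ℱ t`-measurable; `C t` is, and contains `X t` up to a null set.
  set C := fun t => {ω | μ[(S t).indicator (fun _ => (1:ℝ)) | ℱ t] ω ≤ q}
  have hC : ∀ t, MeasurableSet[ℱ t] (C t) := fun t =>
    measurableSet_le stronglyMeasurable_condExp.measurable measurable_const
  have hpow : ∀ k : ℤ, F ^ (k : ℝ) = F ^ k := Real.rpow_intCast F
  have hevent : {ω | ∃ T : ℕ, lam T ω < α ∧ ∀ t < T, lam t ω < α * F ^ (β : ℝ) ∧ ω ∈ X t} ≤ᵐ[μ]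
      {ω | ∃ n, ruinWalk β C S n ω = 0} := by
    filter_upwards [ae_all_iff.2 hcond] with ω hXC ⟨T, hT, hpre⟩
    refine ⟨T, ruinWalk_eq_zero_of_lt (lam := fun t => lam t ω) hF
      (Real.self_le_rpow_of_one_le hF.le (one_le_one_div hs0 hs1)) (zero_lt_one.trans_le hα) ?_
      (fun t => hsucc t ω) (fun t => hfail t ω) hT fun t ht => ?_⟩
    · simpa [← hpow] using (hinit ω).1
    · simpa [← hpow, hXC t (hpre t ht).2, C] using (hpre t ht).1
  calc _ ≤ _ := measure_mono_ae hevent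
    _ ≤ _ := measure_exists_ruinWalk_eq_zero_le hC hSmeas (fun t ω hω => hω) hr hqr
    _ = _ := by rw [ruinProb_succ_self]; congr 2; ring

/-- Monotone random walk domination for the self-adjusting offspring population
size: starting from `λ_0 ∈ [αF^(β-1), αF^β)`, with success (probability at most `q`
while in `X`) dividing `λ` by `F` and failure multiplying it by `F^(1/s)`, the
probability that `λ` falls below `α` before exceeding `α F^β` or leaving `X` is at
most the ruin probability `(1/q - 2)/((1/q - 1)^(β+1) - 1)` of the biased walk. -/
theorem stmt_15 {Ω : Type*} {m0 : MeasurableSpace Ω} (μ : Measure Ω)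
    [IsProbabilityMeasure μ] (ℱ : Filtration ℕ m0)
    (F s α q : ℝ) (β : ℕ) (hF : 1 < F) (hs0 : 0 < s) (hs1 : s ≤ 1)
    (hα : 1 ≤ α) (hβ : 1 ≤ β) (hq0 : 0 < q) (hq : q < 1/2)
    (lam : ℕ → Ω → ℝ) (S X : ℕ → Set Ω)
    (hSmeas : ∀ t, MeasurableSet[ℱ (t + 1)] (S t))
    (hinit : ∀ ω, α * F ^ ((β : ℝ) - 1) ≤ lam 0 ω ∧ lam 0 ω < α * F ^ (β : ℝ))
    (hsucc : ∀ t ω, ω ∈ S t → lam (t + 1) ω = lam t ω / F)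
    (hfail : ∀ t ω, ω ∉ S t → lam (t + 1) ω = lam t ω * F ^ (1/s))
    (hcond : ∀ t, ∀ᵐ ω ∂μ, ω ∈ X t →
      (μ[(S t).indicator (fun _ => (1:ℝ)) | ℱ t]) ω ≤ q) :
    μ {ω | ∃ T : ℕ, lam T ω < α ∧
        ∀ t < T, lam t ω < α * F ^ (β : ℝ) ∧ ω ∈ X t} ≤
      ENNReal.ofReal ((1/q - 2) / ((1/q - 1) ^ (β + 1) - 1)) :=
  stmt_15_general μ ℱ F s α q β hF hs0 hs1 hα hq0 hq lam S X hSmeas hinit hsucc hfail hcond
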